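/- Fix real g > 2 and a positive integer n ≤ g, and for θ ∈ {π/4, 3π/4} define CR_θ on compositions m = (m_1,…,m_r) of n by CR_θ(m) = (−1)^r 2^r 2^{n/2} Π_{s=1}^{r} [(g−1)cos(m_s θ) + cos(m_s π/2)]/(m_1+⋯+m_s). Then CR_{π/4}(m) > 0 if and only if the number of parts m_s with m_s ≡ 1, 7, or 0 (mod 8) is even, and CR_{π/4}(m) < 0 if and only if that number is odd. -/

import Mathlib

open Real

/-- `CR_θ(m)` for a composition `m = (m_1,…,m_r)` of `n`:
`(-1)^r 2^r 2^{n/2} ∏_s [(g-1)cos(m_s θ) + cos(m_s π/2)]/(m_1+⋯+m_s)`. -/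
noncomputable def CR (g θ : ℝ) {n : ℕ} (c : Composition n) : ℝ :=
  (-1 : ℝ) ^ c.length * 2 ^ c.length * Real.sqrt 2 ^ n *
    ∏ s : Fin c.length,
      ((g - 1) * Real.cos ((c.blocksFun s : ℝ) * θ)
        + Real.cos ((c.blocksFun s : ℝ) * (π / 2))) / (c.sizeUpTo (s + 1) : ℝ)

/-!
Each factor of `CR_{π/4}` is nonzero and its sign depends only on `m_s mod 8`: since
`cos (m π/2) = 2 cos² (m π/4) - 1`, the numerator is `g`, `(g-1)√2/2`, `-1`, `-(g-1)√2/2` or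
`2-g` according to `cos (m π/4) = 1, √2/2, 0, -√2/2, -1`, and it is positive exactly for
`m ≡ 1, 7, 0`. Absorbing `(-1)^r` into the product negates every factor, so the product has
exactly one negative factor per such part.
-/

open Finset

theorem Finset.prod_pos_iff_even_card_filter_neg {ι R : Type*} [CommRing R] [LinearOrder R]
    [IsStrictOrderedRing R] (s : Finset ι) (f : ι → R) (hf : ∀ i ∈ s, f i ≠ 0) :
    (0 < ∏ i ∈ s, f i ↔ Even #{i ∈ s | f i < 0}) ∧
      (∏ i ∈ s, f i < 0 ↔ Odd #{i ∈ s | f i < 0}) := by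
  classical
  induction s using Finset.induction_on with
  | empty => simp
  | insert a s ha ih =>
    obtain ⟨ihpos, ihneg⟩ := ih fun i hi => hf i (mem_insert_of_mem hi)
    rw [prod_insert ha, filter_insert]
    rcases (hf a (mem_insert_self a s)).lt_or_gt with h | h
    · rw [if_pos h, card_insert_of_notMem fun hm => ha (mem_filter.1 hm).1, Nat.even_add_one,
        Nat.odd_add_one, Nat.not_even_iff_odd, Nat.not_odd_iff_even, ← ihpos, ← ihneg]
      constructor
      · rw [← neg_mul_neg, mul_pos_iff_of_pos_left (neg_pos.2 h), neg_pos]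
      · rw [← neg_pos, ← neg_mul, mul_pos_iff_of_pos_left (neg_pos.2 h)]
    · rw [if_neg h.not_gt, mul_pos_iff_of_pos_left h, ← neg_pos, ← mul_neg,
        mul_pos_iff_of_pos_left h, neg_pos]
      exact ⟨ihpos, ihneg⟩

theorem cos_nat_mul_eq_cos_mod {x : ℝ} {k j : ℕ} (h : k * x = j * (2 * π)) (m : ℕ) :
    cos (m * x) = cos ((m % k : ℕ) * x) := by
  have hm : (m : ℝ) * x = (m % k : ℕ) * x + (m / k * j : ℕ) * (2 * π) := by
    have := congrArg (Nat.cast (R := ℝ)) (Nat.mod_add_div m k)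
    push_cast at this ⊢
    linear_combination x * this.symm + (m / k : ℕ) * h
  rw [hm, cos_add_nat_mul_two_pi]

theorem cos_fin_eight_mul_pi_div_four (t : Fin 8) :
    cos ((t : ℕ) * (π / 4)) = ![1, √2 / 2, 0, -(√2 / 2), -1, -(√2 / 2), 0, √2 / 2] t := by
  fin_cases t
  · simp
  · simp [cos_pi_div_four]
  · simp [show (2 : ℝ) * (π / 4) = π / 2 by ring]
  · simp [show (3 : ℝ) * (π / 4) = π / 4 + π / 2 by ring, cos_add_pi_div_two]
  · simp [show (4 : ℝ) * (π / 4) = π by ring]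
  · simp [show (5 : ℝ) * (π / 4) = π / 4 + π by ring, cos_add_pi]
  · simp [show (6 : ℝ) * (π / 4) = π / 2 + π by ring, cos_add_pi]
  · simp [show (7 : ℝ) * (π / 4) = π / 4 + π / 2 + π by ring, cos_add_pi, cos_add_pi_div_two]

theorem pi_div_four_factor_sign {g : ℝ} (hg : 2 < g) (m : ℕ) :
    (m % 8 = 1 ∨ m % 8 = 7 ∨ m % 8 = 0 →
      0 < (g - 1) * cos (m * (π / 4)) + cos (m * (π / 2))) ∧
    (¬(m % 8 = 1 ∨ m % 8 = 7 ∨ m % 8 = 0) →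
      (g - 1) * cos (m * (π / 4)) + cos (m * (π / 2)) < 0) := by
  have hcos2 : cos (m * (π / 2)) = 2 * cos (m * (π / 4)) ^ 2 - 1 := by
    rw [← cos_two_mul]; ring_nf
  obtain ⟨t, ht⟩ : ∃ t : Fin 8, m % 8 = t := ⟨⟨m % 8, Nat.mod_lt m (by norm_num)⟩, rfl⟩
  rw [hcos2, cos_nat_mul_eq_cos_mod (k := 8) (j := 1) (by ring), ht,
    cos_fin_eight_mul_pi_div_four]
  have hsq : √2 ^ 2 = 2 := sq_sqrt zero_le_two
  have hpos : 0 < √2 := by positivity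
  fin_cases t <;> norm_num <;> nlinarith

theorem CR_pi_div_four_sign_general (g : ℝ) (hg : 2 < g) (n : ℕ)
    (c : Composition n) :
    (0 < CR g (π / 4) c ↔ Even ((Finset.univ.filter (fun s : Fin c.length =>
        c.blocksFun s % 8 = 1 ∨ c.blocksFun s % 8 = 7 ∨ c.blocksFun s % 8 = 0)).card))
    ∧ (CR g (π / 4) c < 0 ↔ Odd ((Finset.univ.filter (fun s : Fin c.length =>
        c.blocksFun s % 8 = 1 ∨ c.blocksFun s % 8 = 7 ∨ c.blocksFun s % 8 = 0)).card)) := by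
  set x : Fin c.length → ℝ := fun s =>
    ((g - 1) * cos ((c.blocksFun s : ℝ) * (π / 4)) + cos ((c.blocksFun s : ℝ) * (π / 2))) /
      (c.sizeUpTo (s + 1) : ℝ)
  have hCR : CR g (π / 4) c = (2 ^ c.length * √2 ^ n) * ∏ s, -x s := by
    rw [CR, prod_neg, card_univ, Fintype.card_fin]; ring
  have hden (s : Fin c.length) : (0 : ℝ) < c.sizeUpTo (s + 1) := by
    exact_mod_cast (Nat.zero_le _).trans_lt (c.sizeUpTo_strict_mono s.2)
  have hx (s : Fin c.length) : (0 < x s ↔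
      c.blocksFun s % 8 = 1 ∨ c.blocksFun s % 8 = 7 ∨ c.blocksFun s % 8 = 0) ∧ x s ≠ 0 := by
    obtain ⟨hpos, hneg⟩ := pi_div_four_factor_sign hg (c.blocksFun s)
    by_cases hp : c.blocksFun s % 8 = 1 ∨ c.blocksFun s % 8 = 7 ∨ c.blocksFun s % 8 = 0
    · have := div_pos (hpos hp) (hden s)
      exact ⟨iff_of_true this hp, this.ne'⟩
    · have := div_neg_of_neg_of_pos (hneg hp) (hden s)
      exact ⟨iff_of_false this.not_gt hp, this.ne⟩
  have hC : (0 : ℝ) < 2 ^ c.length * √2 ^ n := by positivity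
  rw [hCR, mul_pos_iff_of_pos_left hC, ← neg_pos, ← mul_neg, mul_pos_iff_of_pos_left hC, neg_pos,
    ← filter_congr fun s _ => neg_lt_zero.trans (hx s).1]
  exact prod_pos_iff_even_card_filter_neg _ _ fun s _ => neg_ne_zero.2 (hx s).2

/-- Sign characterization of `CR_{π/4}` via the parity of the number of parts congruent
to `1`, `7` or `0` modulo `8`. -/
theorem CR_pi_div_four_sign (g : ℝ) (hg : 2 < g) (n : ℕ) (hn : 0 < n) (hng : (n : ℝ) ≤ g)
    (c : Composition n) :
    (0 < CR g (π / 4) c ↔ Even ((Finset.univ.filter (fun s : Fin c.length =>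
        c.blocksFun s % 8 = 1 ∨ c.blocksFun s % 8 = 7 ∨ c.blocksFun s % 8 = 0)).card))
    ∧ (CR g (π / 4) c < 0 ↔ Odd ((Finset.univ.filter (fun s : Fin c.length =>
        c.blocksFun s % 8 = 1 ∨ c.blocksFun s % 8 = 7 ∨ c.blocksFun s % 8 = 0)).card)) :=
  CR_pi_div_four_sign_general g hg n c
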